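/- The proportion of ordered pairs (α,β) ∈ C(s,n) × C(s,n) for which the earth mover's distance equals the absolute weighted difference |T(α) − T(β)| equals 2(s+n)/(n(s+1)) − (n-1)!/((s+1)(s+2)⋯(s+n-1)). -/

import Mathlib

/-- `IsComp s n α`: `α` is a weak composition of `s` into `n` parts
(supported on `{0,…,n-1}`). -/
def IsComp (s n : ℕ) (α : ℕ → ℕ) : Prop :=
  (∀ i, n ≤ i → α i = 0) ∧ ∑ i ∈ Finset.range n, α i = s

/-- The word of a composition. -/
def word (n : ℕ) (α : ℕ → ℕ) : List ℕ :=
  ((Finset.range n).sum fun i => Multiset.replicate (α i) i).sort (· ≤ ·)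

/-- The earth mover's distance `EMD(α,β) = ∑_{j=1}^s |w(α)_j − w(β)_j|`. -/
def emd (s n : ℕ) (α β : ℕ → ℕ) : ℕ :=
  ∑ j ∈ Finset.range s, (((word n α).getD j 0 : ℤ) - ((word n β).getD j 0 : ℤ)).natAbs

/-- The weighted total `T(α) = ∑ i·a_i`. -/
def weightedTotal (n : ℕ) (α : ℕ → ℕ) : ℕ :=
  ∑ i ∈ Finset.range n, i * α i


/-!
If a composition is listed as its weakly increasing word `w`, then `T(α) = ∑ⱼ w(α)ⱼ`; hence
the earth mover's distance equals `|T(α) - T(β)|` exactly when the differences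
`w(α)ⱼ - w(β)ⱼ` all have the same sign, i.e. when the two words are comparable pointwise.
The shift `wⱼ ↦ wⱼ + j` maps the words of length `s` with letters below `n` bijectively onto
the `s`-subsets of `{0, …, m - 1}`, `m = s + n - 1`, listed increasingly (stars and bars),
and it preserves the pointwise order.

Pairs `(x, y)` of `s`-subsets with `x ≰ y` correspond to pairs of an `(s + 1)`-subset and an
`(s - 1)`-subset: exchange the tails of `x` and `y` right after the first index where `y`
drops below `x` (the two-path reflection of Lindström–Gessel–Viennot). Inclusion–exclusion
then counts `2 (C(m,s)² - C(m,s+1) C(m,s-1)) - C(m,s)` comparable pairs, and the identities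
`C(m,s+1) (s+1) = C(m,s) (n-1)`, `C(m,s-1) n = C(m,s) s` turn this into the formula.
-/

open Finset

namespace List

lemma Pairwise.rel_getD {α : Type*} {R : α → α → Prop} {l : List α} {d : α}
    (hl : l.Pairwise R) {i j : ℕ} (hij : i < j) (hj : j < l.length) :
    R (l.getD i d) (l.getD j d) := by
  rw [getD_eq_getElem _ _ (hij.trans hj), getD_eq_getElem _ _ hj]
  exact pairwise_iff_getElem.1 hl i j _ hj hij

lemma pairwise_lt_iff_getD {α : Type*} [Preorder α] {l : List α} (d : α) :
    l.Pairwise (· < ·) ↔ ∀ i, i + 1 < l.length → l.getD i d < l.getD (i + 1) d := by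
  rw [← isChain_iff_pairwise, isChain_iff_getElem]
  refine forall_congr' fun i => ⟨fun h hi => ?_, fun h hi => ?_⟩
  · rw [getD_eq_getElem _ _ (by omega), getD_eq_getElem _ _ hi]; exact h hi
  · have := h hi
    rwa [getD_eq_getElem _ _ (by omega), getD_eq_getElem _ _ hi] at this

lemma getD_add_le_getD {l : List ℕ} (hl : l.Pairwise (· < ·)) {i j : ℕ} (hij : i ≤ j)
    (hj : j < l.length) : l.getD i 0 + (j - i) ≤ l.getD j 0 := by
  induction j, hij using Nat.le_induction with
  | base => simp
  | succ j hij ih => have := hl.rel_getD (d := 0) (Nat.lt_add_one j) hj; grind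

lemma getD_mapIdx_of_lt {α β : Type*} (f : ℕ → α → β) {l : List α} {i : ℕ} (d : α) (d' : β)
    (h : i < l.length) : (l.mapIdx f).getD i d' = f i (l.getD i d) := by
  rw [getD_eq_getElem _ _ (by simpa using h), getElem_mapIdx, getD_eq_getElem _ _ h]

lemma sum_range_getD {M : Type*} [AddCommMonoid M] (l : List M) :
    ∑ j ∈ Finset.range l.length, l.getD j 0 = l.sum := by
  induction l with
  | nil => simp
  | cons a l ih => rw [length_cons, Finset.sum_range_succ', sum_cons, ← ih]; simp [add_comm]

end List

lemma Finset.sum_abs_eq_abs_sum_iff {ι G : Type*} [AddCommGroup G] [LinearOrder G]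
    [IsOrderedAddMonoid G] {t : Finset ι} {f : ι → G} :
    ∑ i ∈ t, |f i| = |∑ i ∈ t, f i| ↔ (∀ i ∈ t, 0 ≤ f i) ∨ ∀ i ∈ t, f i ≤ 0 := by
  constructor
  · intro h
    rcases le_total 0 (∑ i ∈ t, f i) with hsum | hsum
    · rw [abs_of_nonneg hsum, ← sub_eq_zero, ← sum_sub_distrib,
        sum_eq_zero_iff_of_nonneg fun i _ => sub_nonneg.2 (le_abs_self _)] at h
      exact .inl fun i hi => abs_eq_self.1 (sub_eq_zero.1 (h i hi))
    · rw [abs_of_nonpos hsum, ← sub_eq_zero, ← sum_neg_distrib, ← sum_sub_distrib,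
        sum_eq_zero_iff_of_nonneg fun i _ => sub_nonneg.2 (neg_le_abs _)] at h
      exact .inr fun i hi => abs_eq_neg_self.1 (sub_eq_zero.1 (h i hi))
  · rintro (h | h)
    · rw [abs_of_nonneg (sum_nonneg h)]
      exact sum_congr rfl fun i hi => abs_of_nonneg (h i hi)
    · rw [abs_of_nonpos (sum_nonpos h), ← sum_neg_distrib]
      exact sum_congr rfl fun i hi => abs_of_nonpos (h i hi)

def swapTails (x y : List ℕ) (j : ℕ) : List ℕ × List ℕ :=
  (y.take (j + 1) ++ x.drop j, x.take j ++ y.drop (j + 1))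

section SwapTails

variable {x y : List ℕ} {j : ℕ}

lemma length_swapTails_fst (hx : j ≤ x.length) (hy : j < y.length) :
    (swapTails x y j).1.length = x.length + 1 := by
  simp only [swapTails, List.length_append, List.length_take, List.length_drop]
  omega

lemma length_swapTails_snd (hx : j ≤ x.length) (hy : j < y.length) :
    (swapTails x y j).2.length = y.length - 1 := by
  simp only [swapTails, List.length_append, List.length_take, List.length_drop]
  omega

lemma getD_swapTails_fst (hj : j < y.length) (i : ℕ) :
    (swapTails x y j).1.getD i 0 = if i ≤ j then y.getD i 0 else x.getD (i - 1) 0 := by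
  simp only [swapTails, List.getD_eq_getElem?_getD, List.getElem?_append, List.getElem?_take,
    List.getElem?_drop, List.length_take]
  split_ifs <;> first | omega | (congr 2; omega)

lemma getD_swapTails_snd (hj : j ≤ x.length) (i : ℕ) :
    (swapTails x y j).2.getD i 0 = if i < j then x.getD i 0 else y.getD (i + 1) 0 := by
  simp only [swapTails, List.getD_eq_getElem?_getD, List.getElem?_append, List.getElem?_take,
    List.getElem?_drop, List.length_take]
  split_ifs <;> first | omega | (congr 2; omega)

lemma swapTails_swapTails (hx : j ≤ x.length) (hy : j < y.length) :
    swapTails (swapTails x y j).2 (swapTails x y j).1 j = (y, x) := by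
  simp only [swapTails]
  rw [List.take_left' (by simp; omega), List.drop_left' (by simp; omega),
    List.take_left' (by simp; omega), List.drop_left' (by simp; omega),
    List.take_append_drop, List.take_append_drop]

lemma pairwise_swapTails_fst (hxs : x.Pairwise (· < ·)) (hys : y.Pairwise (· < ·))
    (hx : j ≤ x.length) (hy : j < y.length) (hjx : j < x.length → y.getD j 0 < x.getD j 0) :
    (swapTails x y j).1.Pairwise (· < ·) := by
  rw [List.pairwise_lt_iff_getD 0, length_swapTails_fst hx hy]
  intro i hi
  rw [getD_swapTails_fst hy, getD_swapTails_fst hy]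
  rcases lt_trichotomy (i + 1) (j + 1) with h | h | h
  · rw [if_pos (by omega), if_pos (by omega)]
    exact hys.rel_getD (Nat.lt_add_one i) (by omega)
  · rw [if_pos (by omega), if_neg (by omega), show i + 1 - 1 = j by omega]
    exact (show i = j by omega) ▸ hjx (by omega)
  · rw [if_neg (by omega), if_neg (by omega), show i + 1 - 1 = i - 1 + 1 by omega]
    exact hxs.rel_getD (Nat.lt_add_one _) (by omega)

lemma pairwise_swapTails_snd (hxs : x.Pairwise (· < ·)) (hys : y.Pairwise (· < ·))
    (hx : j ≤ x.length) (hy : j < y.length) (hle : ∀ i < j, x.getD i 0 ≤ y.getD i 0) :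
    (swapTails x y j).2.Pairwise (· < ·) := by
  rw [List.pairwise_lt_iff_getD 0, length_swapTails_snd hx hy]
  intro i hi
  rw [getD_swapTails_snd hx, getD_swapTails_snd hx]
  rcases lt_trichotomy (i + 1) j with h | h | h
  · rw [if_pos (by omega), if_pos h]
    exact hxs.rel_getD (Nat.lt_add_one i) (by omega)
  · rw [if_pos (by omega), if_neg (by omega)]
    exact (hle i (by omega)).trans_lt (hys.rel_getD (by omega) (by omega))
  · rw [if_neg (by omega), if_neg (by omega)]
    exact hys.rel_getD (Nat.lt_add_one _) (by omega)

lemma forall_mem_swapTails {P : ℕ → Prop} (hx : ∀ z ∈ x, P z) (hy : ∀ z ∈ y, P z) :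
    (∀ z ∈ (swapTails x y j).1, P z) ∧ ∀ z ∈ (swapTails x y j).2, P z := by
  simp only [swapTails, List.mem_append]
  exact ⟨fun z hz => hz.elim (fun h => hy z (List.mem_of_mem_take h))
      (fun h => hx z (List.mem_of_mem_drop h)),
    fun z hz => hz.elim (fun h => hx z (List.mem_of_mem_take h))
      (fun h => hy z (List.mem_of_mem_drop h))⟩

end SwapTails

-- The cap `y.length` is the crossing index of an `(s + 1)`-subset `x` and an `(s - 1)`-subset
-- `y` that never rises above `x`.
def firstLT (x y : List ℕ) : ℕ :=
  Nat.find (⟨y.length, .inl le_rfl⟩ : ∃ i, y.length ≤ i ∨ x.getD i 0 < y.getD i 0)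

section FirstLT

variable {x y : List ℕ} {i : ℕ}

lemma firstLT_le_length : firstLT x y ≤ y.length :=
  Nat.find_min' _ (.inl le_rfl)

lemma firstLT_le_of_getD_lt (h : x.getD i 0 < y.getD i 0) : firstLT x y ≤ i :=
  Nat.find_min' _ (.inr h)

lemma firstLT_eq_length_or_getD_lt :
    firstLT x y = y.length ∨ x.getD (firstLT x y) 0 < y.getD (firstLT x y) 0 :=
  (Nat.find_spec (p := fun i => y.length ≤ i ∨ x.getD i 0 < y.getD i 0) _).imp
    (fun h => le_antisymm firstLT_le_length h) id

lemma getD_le_getD_of_lt_firstLT (h : i < firstLT x y) : y.getD i 0 ≤ x.getD i 0 :=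
  not_lt.1 fun h' => (Nat.find_min _ h) (.inr h')

lemma firstLT_swapTails {j : ℕ} (hy : y.Pairwise (· < ·)) (hx : j ≤ x.length)
    (hj : j < y.length) (hle : ∀ i < j, x.getD i 0 ≤ y.getD i 0) :
    firstLT (swapTails x y j).1 (swapTails x y j).2 = j := by
  refine (Nat.find_eq_iff _).2 ⟨?_, fun i hi => ?_⟩
  · rw [length_swapTails_snd hx hj, getD_swapTails_fst hj, getD_swapTails_snd hx, if_pos le_rfl,
      if_neg (lt_irrefl j)]
    by_cases hj' : j + 1 < y.length
    · exact .inr (hy.rel_getD (Nat.lt_add_one j) hj')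
    · exact .inl (by omega)
  · rw [length_swapTails_snd hx hj, getD_swapTails_fst hj, getD_swapTails_snd hx, if_pos hi.le,
      if_pos hi]
    have := hle i hi
    omega

end FirstLT

def sortedSubsets (m k : ℕ) : Finset (List ℕ) :=
  (powersetCard k (range m)).image (·.sort (· ≤ ·))

lemma mem_sortedSubsets {m k : ℕ} {l : List ℕ} :
    l ∈ sortedSubsets m k ↔ l.Pairwise (· < ·) ∧ l.length = k ∧ ∀ x ∈ l, x < m := by
  constructor
  · intro hl
    obtain ⟨t, ht, rfl⟩ := mem_image.1 hl
    rw [mem_powersetCard] at ht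
    refine ⟨List.sortedLT_iff_pairwise.1 (sortedLT_sort _), by rw [length_sort, ht.2],
      fun x hx => mem_range.1 (ht.1 ((mem_sort _).1 hx))⟩
  · rintro ⟨hl, hlen, hm⟩
    refine mem_image.2 ⟨l.toFinset, mem_powersetCard.2 ⟨fun x hx => ?_, ?_⟩, ?_⟩
    · exact mem_range.2 (hm x (List.mem_toFinset.1 hx))
    · rw [List.toFinset_card_of_nodup hl.nodup, hlen]
    · exact (List.toFinset_sort _ hl.nodup).2 (hl.imp le_of_lt)

lemma card_sortedSubsets (m k : ℕ) : #(sortedSubsets m k) = m.choose k := by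
  have hinj : Function.Injective fun t : Finset ℕ => t.sort (· ≤ ·) := fun t₁ t₂ h => by
    simpa using congrArg List.toFinset h
  rw [sortedSubsets, card_image_of_injective _ hinj, card_powersetCard, card_range]

def PointwiseLE (x y : List ℕ) : Prop := ∀ i, x.getD i 0 ≤ y.getD i 0

lemma PointwiseLE.antisymm {x y : List ℕ} (hlen : x.length = y.length) (hxy : PointwiseLE x y)
    (hyx : PointwiseLE y x) : x = y :=
  List.ext_getElem hlen fun i hx hy => by
    simpa only [List.getD_eq_getElem _ _ hx, List.getD_eq_getElem _ _ hy] using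
      le_antisymm (hxy i) (hyx i)

lemma firstLT_lt_length_of_not_pointwiseLE {x y : List ℕ} (hxy : ¬ PointwiseLE x y) :
    firstLT y x < x.length := by
  obtain ⟨i, hi⟩ := not_forall.1 hxy
  have hix : i < x.length := by
    by_contra h
    rw [List.getD_eq_default _ _ (not_lt.1 h)] at hi
    omega
  exact (firstLT_le_of_getD_lt (not_le.1 hi)).trans_lt hix

section Pairs

open scoped Classical

noncomputable def comparablePairs (m s : ℕ) : Finset (List ℕ × List ℕ) :=
  {p ∈ sortedSubsets m s ×ˢ sortedSubsets m s | PointwiseLE p.1 p.2 ∨ PointwiseLE p.2 p.1}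

noncomputable def crossingPairs (m s : ℕ) : Finset (List ℕ × List ℕ) :=
  {p ∈ sortedSubsets m s ×ˢ sortedSubsets m s | ¬ PointwiseLE p.1 p.2}

lemma mem_crossingPairs {m s : ℕ} {p : List ℕ × List ℕ} :
    p ∈ crossingPairs m s ↔
      p.1 ∈ sortedSubsets m s ∧ p.2 ∈ sortedSubsets m s ∧ ¬ PointwiseLE p.1 p.2 := by
  rw [crossingPairs, mem_filter, mem_product, and_assoc]

variable (m s : ℕ)

lemma card_filter_pointwiseLE_swap :
    #{p ∈ sortedSubsets m s ×ˢ sortedSubsets m s | PointwiseLE p.2 p.1}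
      = #{p ∈ sortedSubsets m s ×ˢ sortedSubsets m s | PointwiseLE p.1 p.2} :=
  card_nbij' Prod.swap Prod.swap (fun p hp => by simp_all [and_comm])
    (fun p hp => by simp_all [and_comm]) (fun p _ => p.swap_swap) (fun p _ => p.swap_swap)

lemma filter_pointwiseLE_and_ge :
    {p ∈ sortedSubsets m s ×ˢ sortedSubsets m s | PointwiseLE p.1 p.2 ∧ PointwiseLE p.2 p.1}
      = (sortedSubsets m s).diag := by
  ext ⟨x, y⟩
  simp only [mem_filter, mem_product, mem_diag]
  constructor
  · rintro ⟨⟨hx, hy⟩, hxy, hyx⟩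
    refine ⟨hx, hxy.antisymm ?_ hyx⟩
    rw [(mem_sortedSubsets.1 hx).2.1, (mem_sortedSubsets.1 hy).2.1]
  · rintro ⟨hx, rfl⟩
    exact ⟨⟨hx, hx⟩, fun _ => le_rfl, fun _ => le_rfl⟩

lemma card_comparablePairs_add :
    #(comparablePairs m s) + m.choose s + 2 * #(crossingPairs m s) = 2 * m.choose s ^ 2 := by
  have hunion := card_union_add_card_inter
    {p ∈ sortedSubsets m s ×ˢ sortedSubsets m s | PointwiseLE p.1 p.2}
    {p ∈ sortedSubsets m s ×ˢ sortedSubsets m s | PointwiseLE p.2 p.1}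
  rw [← filter_or, ← filter_and, filter_pointwiseLE_and_ge, diag_card,
    card_filter_pointwiseLE_swap, card_sortedSubsets] at hunion
  have hsplit := card_filter_add_card_filter_not (s := sortedSubsets m s ×ˢ sortedSubsets m s)
    fun p => PointwiseLE p.1 p.2
  rw [card_product, card_sortedSubsets] at hsplit
  rw [comparablePairs, crossingPairs, hunion, sq, ← hsplit]
  ring

end Pairs

def crossTails (p : List ℕ × List ℕ) : List ℕ × List ℕ :=
  swapTails p.1 p.2 (firstLT p.2 p.1)

def uncrossTails (q : List ℕ × List ℕ) : List ℕ × List ℕ :=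
  (swapTails q.2 q.1 (firstLT q.1 q.2)).swap

section Crossing

variable {m s : ℕ} {x y a b : List ℕ}

lemma crossTails_mem (hx : x ∈ sortedSubsets m s) (hy : y ∈ sortedSubsets m s)
    (hxy : ¬ PointwiseLE x y) :
    crossTails (x, y) ∈ sortedSubsets m (s + 1) ×ˢ sortedSubsets m (s - 1) := by
  obtain ⟨hxs, hxl, hxm⟩ := mem_sortedSubsets.1 hx
  obtain ⟨hys, hyl, hym⟩ := mem_sortedSubsets.1 hy
  have hj := firstLT_lt_length_of_not_pointwiseLE hxy
  have hjx : y.getD (firstLT y x) 0 < x.getD (firstLT y x) 0 :=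
    firstLT_eq_length_or_getD_lt.resolve_left hj.ne
  have hm := forall_mem_swapTails (j := firstLT y x) hxm hym
  simp only [crossTails]
  refine mem_product.2
    ⟨mem_sortedSubsets.2 ⟨?_, ?_, hm.1⟩, mem_sortedSubsets.2 ⟨?_, ?_, hm.2⟩⟩
  · exact pairwise_swapTails_fst hxs hys hj.le (by omega) fun _ => hjx
  · rw [length_swapTails_fst hj.le (by omega), hxl]
  · exact pairwise_swapTails_snd hxs hys hj.le (by omega) fun i hi =>
      getD_le_getD_of_lt_firstLT hi
  · rw [length_swapTails_snd hj.le (by omega), hyl]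

lemma uncrossTails_mem (hs : 1 ≤ s) (ha : a ∈ sortedSubsets m (s + 1))
    (hb : b ∈ sortedSubsets m (s - 1)) : uncrossTails (a, b) ∈ crossingPairs m s := by
  obtain ⟨has, hal, ham⟩ := mem_sortedSubsets.1 ha
  obtain ⟨hbs, hbl, hbm⟩ := mem_sortedSubsets.1 hb
  have hj : firstLT a b ≤ b.length := firstLT_le_length
  have hle : ∀ i < firstLT a b, b.getD i 0 ≤ a.getD i 0 := fun i hi =>
    getD_le_getD_of_lt_firstLT hi
  have hm := forall_mem_swapTails (j := firstLT a b) hbm ham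
  rw [mem_crossingPairs]
  simp only [uncrossTails, Prod.fst_swap, Prod.snd_swap]
  refine ⟨mem_sortedSubsets.2 ⟨?_, ?_, hm.2⟩, mem_sortedSubsets.2 ⟨?_, ?_, hm.1⟩,
    fun hle' => ?_⟩
  · exact pairwise_swapTails_snd hbs has hj (by omega) hle
  · rw [length_swapTails_snd hj (by omega), hal, Nat.add_sub_cancel]
  · exact pairwise_swapTails_fst hbs has hj (by omega) fun h =>
      firstLT_eq_length_or_getD_lt.resolve_left h.ne
  · rw [length_swapTails_fst hj (by omega), hbl]; omega
  · have := hle' (firstLT a b)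
    rw [getD_swapTails_snd hj, getD_swapTails_fst (by omega), if_neg (lt_irrefl _),
      if_pos le_rfl] at this
    exact absurd this (not_le.2 (has.rel_getD (Nat.lt_add_one _) (by omega)))

lemma uncrossTails_crossTails (hx : x ∈ sortedSubsets m s) (hy : y ∈ sortedSubsets m s)
    (hxy : ¬ PointwiseLE x y) : uncrossTails (crossTails (x, y)) = (x, y) := by
  have hys := (mem_sortedSubsets.1 hy).1
  have hj := firstLT_lt_length_of_not_pointwiseLE hxy
  have hjy : firstLT y x < y.length := by
    rw [(mem_sortedSubsets.1 hy).2.1, ← (mem_sortedSubsets.1 hx).2.1]; exact hj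
  have hfirst : firstLT (crossTails (x, y)).1 (crossTails (x, y)).2 = firstLT y x :=
    firstLT_swapTails hys hj.le hjy fun i hi => getD_le_getD_of_lt_firstLT hi
  rw [uncrossTails, hfirst, crossTails, swapTails_swapTails hj.le hjy, Prod.swap_prod_mk]

lemma crossTails_uncrossTails (hs : 1 ≤ s) (ha : a ∈ sortedSubsets m (s + 1))
    (hb : b ∈ sortedSubsets m (s - 1)) : crossTails (uncrossTails (a, b)) = (a, b) := by
  obtain ⟨has, hal, -⟩ := mem_sortedSubsets.1 ha
  have hbl := (mem_sortedSubsets.1 hb).2.1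
  have hj : firstLT a b ≤ b.length := firstLT_le_length
  have hja : firstLT a b < a.length := by omega
  have hfirst : firstLT (uncrossTails (a, b)).2 (uncrossTails (a, b)).1 = firstLT a b :=
    firstLT_swapTails has hj hja fun i hi => getD_le_getD_of_lt_firstLT hi
  rw [crossTails, hfirst]
  exact swapTails_swapTails hj hja

lemma card_crossingPairs (hs : 1 ≤ s) :
    #(crossingPairs m s) = m.choose (s + 1) * m.choose (s - 1) := by
  rw [← card_sortedSubsets, ← card_sortedSubsets, ← card_product]
  refine card_nbij' crossTails uncrossTails ?_ ?_ ?_ ?_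
  · rintro ⟨x, y⟩ hp
    obtain ⟨hx, hy, hxy⟩ := mem_crossingPairs.1 hp
    exact crossTails_mem hx hy hxy
  · rintro ⟨a, b⟩ hq
    exact uncrossTails_mem hs (mem_product.1 hq).1 (mem_product.1 hq).2
  · rintro ⟨x, y⟩ hp
    obtain ⟨hx, hy, hxy⟩ := mem_crossingPairs.1 hp
    exact uncrossTails_crossTails hx hy hxy
  · rintro ⟨a, b⟩ hq
    exact crossTails_uncrossTails hs (mem_product.1 hq).1 (mem_product.1 hq).2

-- Stated multiplicatively so that it also covers `s = 0`, where `s - 1` truncates to `0`.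
lemma card_crossingPairs_mul (m s : ℕ) :
    #(crossingPairs m s) * ((s + 1) * (m + 1 - s)) = m.choose s ^ 2 * (s * (m - s)) := by
  rcases Nat.eq_zero_or_pos s with rfl | hs
  · have hempty : crossingPairs m 0 = ∅ := by
      refine eq_empty_of_forall_notMem fun p hp => ?_
      obtain ⟨hx, hy, hxy⟩ := mem_crossingPairs.1 hp
      refine hxy fun i => ?_
      rw [List.length_eq_zero_iff.1 (mem_sortedSubsets.1 hx).2.1,
        List.length_eq_zero_iff.1 (mem_sortedSubsets.1 hy).2.1]
    simp [hempty]
  rw [card_crossingPairs hs]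
  have h₁ := Nat.choose_succ_right_eq m s
  have h₂ := Nat.choose_succ_right_eq m (s - 1)
  rw [Nat.sub_add_cancel hs, show m - (s - 1) = m + 1 - s by omega] at h₂
  calc m.choose (s + 1) * m.choose (s - 1) * ((s + 1) * (m + 1 - s))
      = m.choose (s + 1) * (s + 1) * (m.choose (s - 1) * (m + 1 - s)) := by ring
    _ = m.choose s ^ 2 * (s * (m - s)) := by rw [h₁, ← h₂]; ring

end Crossing

section Words

variable {s n : ℕ} {α : ℕ → ℕ}

lemma pairwise_word (n : ℕ) (α : ℕ → ℕ) : (word n α).Pairwise (· ≤ ·) :=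
  Multiset.pairwise_sort _ _

lemma length_word (h : IsComp s n α) : (word n α).length = s := by
  simp [word, Multiset.card_sum, h.2]

lemma lt_of_mem_word {x : ℕ} (hx : x ∈ word n α) : x < n := by
  obtain ⟨i, hi, hxi⟩ := Multiset.mem_sum.1 ((Multiset.mem_sort _).1 hx)
  exact (Multiset.eq_of_mem_replicate hxi).symm ▸ mem_range.1 hi

lemma sum_word (n : ℕ) (α : ℕ → ℕ) : (word n α).sum = weightedTotal n α := by
  rw [word, ← Multiset.sum_coe, Multiset.sort_eq, Multiset.sum_sum, weightedTotal]
  simp [Multiset.sum_replicate, mul_comm]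

lemma count_word {i : ℕ} (hi : i < n) : (word n α).count i = α i := by
  rw [word, ← Multiset.coe_count, Multiset.sort_eq, Multiset.count_sum',
    sum_eq_single_of_mem i (mem_range.2 hi) fun j _ hj => by simp [Multiset.count_replicate, hj]]
  simp

end Words

def compOfWord (n : ℕ) (l : List ℕ) : ℕ → ℕ := fun i => if i < n then l.count i else 0

section CompOfWord

variable {s n : ℕ} {l : List ℕ}

lemma compOfWord_word {α : ℕ → ℕ} (hα : IsComp s n α) : compOfWord n (word n α) = α := by
  funext i
  by_cases hi : i < n
  · rw [compOfWord, if_pos hi, count_word hi]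
  · rw [compOfWord, if_neg hi, hα.1 i (not_lt.1 hi)]

lemma sum_replicate_compOfWord (hl : ∀ x ∈ l, x < n) :
    ∑ i ∈ range n, Multiset.replicate (compOfWord n l i) i = (l : Multiset ℕ) := by
  ext x
  rw [Multiset.count_sum', Multiset.coe_count]
  by_cases hx : x < n
  · rw [sum_eq_single_of_mem x (mem_range.2 hx) fun j _ hj => by
      simp [Multiset.count_replicate, hj]]
    simp [compOfWord, hx]
  · rw [List.count_eq_zero_of_not_mem fun h => hx (hl x h)]
    refine sum_eq_zero fun j hj => ?_
    rw [Multiset.count_replicate, if_neg]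
    exact fun h => hx (h ▸ mem_range.1 hj)

lemma word_compOfWord (hs : l.Pairwise (· ≤ ·)) (hl : ∀ x ∈ l, x < n) :
    word n (compOfWord n l) = l := by
  rw [word, sum_replicate_compOfWord hl, Multiset.coe_sort]
  exact List.mergeSort_eq_self _ hs

lemma isComp_compOfWord (hl : ∀ x ∈ l, x < n) : IsComp l.length n (compOfWord n l) := by
  refine ⟨fun i hi => if_neg (not_lt.2 hi), ?_⟩
  have := congrArg Multiset.card (sum_replicate_compOfWord hl)
  simpa [Multiset.card_sum] using this

end CompOfWord

def shiftUp (l : List ℕ) : List ℕ := l.mapIdx fun j w => w + j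

def shiftDown (l : List ℕ) : List ℕ := l.mapIdx fun j w => w - j

section Shift

variable {k n : ℕ} {l l' : List ℕ}

lemma getD_shiftUp (l : List ℕ) (i : ℕ) :
    (shiftUp l).getD i 0 = if i < l.length then l.getD i 0 + i else 0 := by
  split_ifs with h
  · exact List.getD_mapIdx_of_lt _ 0 0 h
  · exact List.getD_eq_default _ _ (by simpa [shiftUp] using h)

lemma getD_shiftDown (l : List ℕ) (i : ℕ) :
    (shiftDown l).getD i 0 = l.getD i 0 - i := by
  by_cases h : i < l.length
  · exact List.getD_mapIdx_of_lt _ 0 0 h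
  · rw [List.getD_eq_default _ _ (by simpa [shiftDown] using h),
      List.getD_eq_default _ _ (not_lt.1 h), Nat.zero_sub]

lemma shiftDown_shiftUp (l : List ℕ) : shiftDown (shiftUp l) = l := by
  refine List.ext_getElem (by simp [shiftDown, shiftUp]) fun i _ _ => ?_
  simp [shiftDown, shiftUp]

lemma shiftUp_shiftDown (hl : l.Pairwise (· < ·)) : shiftUp (shiftDown l) = l := by
  refine List.ext_getElem (by simp [shiftUp, shiftDown]) fun i h₁ h₂ => ?_
  have := l.getD_add_le_getD hl (Nat.zero_le i) h₂
  simp only [shiftUp, shiftDown, List.getElem_mapIdx]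
  rw [List.getD_eq_getElem _ _ h₂] at this
  omega

lemma pointwiseLE_shiftUp_iff (hlen : l.length = l'.length) :
    PointwiseLE (shiftUp l) (shiftUp l') ↔ PointwiseLE l l' := by
  refine forall_congr' fun i => ?_
  rw [getD_shiftUp, getD_shiftUp, ← hlen]
  split_ifs with h
  · omega
  · rw [List.getD_eq_default _ _ (not_lt.1 h), List.getD_eq_default _ _ (hlen ▸ not_lt.1 h)]

lemma shiftUp_mem_sortedSubsets (hs : l.Pairwise (· ≤ ·)) (hl : ∀ x ∈ l, x < n) :
    shiftUp l ∈ sortedSubsets (l.length + n - 1) l.length := by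
  have hlen : (shiftUp l).length = l.length := by simp [shiftUp]
  refine mem_sortedSubsets.2 ⟨(List.pairwise_lt_iff_getD 0).2 fun i hi => ?_, hlen, fun x hx => ?_⟩
  · rw [hlen] at hi
    rw [getD_shiftUp, getD_shiftUp, if_pos (by omega), if_pos hi]
    have := hs.rel_getD (d := 0) (Nat.lt_add_one i) hi
    omega
  · obtain ⟨i, hi, rfl⟩ := List.getElem_of_mem hx
    rw [hlen] at hi
    have := hl _ (List.getElem_mem (l := l) hi)
    simp only [shiftUp, List.getElem_mapIdx]
    omega

lemma shiftDown_spec (hl : l ∈ sortedSubsets (k + n - 1) k) :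
    (shiftDown l).Pairwise (· ≤ ·) ∧ (shiftDown l).length = k ∧
      ∀ x ∈ shiftDown l, x < n := by
  obtain ⟨hs, hlen, hm⟩ := mem_sortedSubsets.1 hl
  have hlen' : (shiftDown l).length = k := by simp [shiftDown, hlen]
  refine ⟨List.isChain_iff_pairwise.1 (List.isChain_iff_getElem.2 fun i hi => ?_), hlen',
    fun x hx => ?_⟩
  · rw [hlen'] at hi
    have h₁ := l.getD_add_le_getD hs (Nat.zero_le i) (by omega)
    have h₂ := hs.rel_getD (d := 0) (Nat.lt_add_one i) (by omega)
    rw [← List.getD_eq_getElem _ 0, ← List.getD_eq_getElem _ 0, getD_shiftDown, getD_shiftDown]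
    omega
  · obtain ⟨i, hi, rfl⟩ := List.getElem_of_mem hx
    rw [hlen'] at hi
    have h₁ := l.getD_add_le_getD hs (i := i) (j := k - 1) (by omega) (by omega)
    have h₂ := hm _ (List.getElem_mem (l := l) (show k - 1 < l.length by omega))
    rw [List.getD_eq_getElem _ _ (show k - 1 < l.length by omega)] at h₁
    have hlt : l.getD i 0 < n + i := by omega
    have hge := l.getD_add_le_getD hs (Nat.zero_le i) (by omega)
    rw [← List.getD_eq_getElem _ 0, getD_shiftDown]
    omega

end Shift

section Emd

variable {s n : ℕ} {α β : ℕ → ℕ}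

lemma sum_getD_word (hα : IsComp s n α) :
    ∑ j ∈ range s, ((word n α).getD j 0 : ℤ) = weightedTotal n α := by
  rw [← sum_word, ← List.sum_range_getD, length_word hα, Nat.cast_sum]

lemma pointwiseLE_iff_of_length_eq {x y : List ℕ} (hx : x.length = s) (hy : y.length = s) :
    PointwiseLE x y ↔ ∀ j ∈ range s, (x.getD j 0 : ℤ) ≤ y.getD j 0 := by
  refine ⟨fun h j _ => Nat.cast_le.2 (h j), fun h j => ?_⟩
  by_cases hj : j < s
  · exact Nat.cast_le.1 (h j (mem_range.2 hj))
  · rw [List.getD_eq_default _ _ (by omega), List.getD_eq_default _ _ (by omega)]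

lemma emd_eq_natAbs_iff (hα : IsComp s n α) (hβ : IsComp s n β) :
    emd s n α β = ((weightedTotal n α : ℤ) - weightedTotal n β).natAbs ↔
      PointwiseLE (word n α) (word n β) ∨ PointwiseLE (word n β) (word n α) := by
  rw [emd, ← sum_getD_word hα, ← sum_getD_word hβ, ← sum_sub_distrib,
    ← Nat.cast_inj (R := ℤ), Nat.cast_sum]
  simp only [Int.natCast_natAbs]
  rw [sum_abs_eq_abs_sum_iff, or_comm,
    pointwiseLE_iff_of_length_eq (length_word hα) (length_word hβ),
    pointwiseLE_iff_of_length_eq (length_word hβ) (length_word hα)]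
  simp only [sub_nonneg, sub_nonpos]

end Emd

section Encoding

variable (s n : ℕ)

def isCompEquivSortedSubsets :
    {α : ℕ → ℕ // IsComp s n α} ≃ sortedSubsets (s + n - 1) s where
  toFun α := ⟨shiftUp (word n α), by
    simpa only [length_word α.2] using
      shiftUp_mem_sortedSubsets (pairwise_word n α) fun _ => lt_of_mem_word⟩
  invFun l :=
    have hl := shiftDown_spec (n := n) l.2
    ⟨compOfWord n (shiftDown l), by simpa only [hl.2.1] using isComp_compOfWord hl.2.2⟩
  left_inv α := Subtype.ext <| by
    simp only [shiftDown_shiftUp, compOfWord_word α.2]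
  right_inv l := Subtype.ext <| by
    have hl := shiftDown_spec (n := n) l.2
    simp only [word_compOfWord hl.1 hl.2.2, shiftUp_shiftDown (mem_sortedSubsets.1 l.2).1]

lemma card_isComp : Nat.card {α : ℕ → ℕ // IsComp s n α} = (s + n - 1).choose s := by
  rw [Nat.card_congr (isCompEquivSortedSubsets s n), Nat.card_eq_finsetCard, card_sortedSubsets]

lemma card_emd_eq_natAbs :
    Nat.card {p : (ℕ → ℕ) × (ℕ → ℕ) // IsComp s n p.1 ∧ IsComp s n p.2 ∧
        emd s n p.1 p.2 = ((weightedTotal n p.1 : ℤ) - (weightedTotal n p.2 : ℤ)).natAbs}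
      = #(comparablePairs (s + n - 1) s) := by
  classical
  let e := isCompEquivSortedSubsets s n
  have hcomp (α β : {α // IsComp s n α}) :
      emd s n α β = ((weightedTotal n α : ℤ) - (weightedTotal n β : ℤ)).natAbs ↔
        PointwiseLE (e α) (e β) ∨ PointwiseLE (e β) (e α) := by
    have hlen : (word n α).length = (word n β).length := by
      rw [length_word α.2, length_word β.2]
    rw [emd_eq_natAbs_iff α.2 β.2]
    exact (or_congr (pointwiseLE_shiftUp_iff hlen) (pointwiseLE_shiftUp_iff hlen.symm)).symm
  rw [← Nat.card_eq_finsetCard]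
  refine Nat.card_congr <| Equiv.trans ?_ <|
    (Equiv.subtypeEquiv (e.prodCongr e)
      (q := fun r => PointwiseLE r.1.1 r.2.1 ∨ PointwiseLE r.2.1 r.1.1) fun _ => Iff.rfl).trans ?_
  · exact
      { toFun p := ⟨(⟨_, p.2.1⟩, ⟨_, p.2.2.1⟩), (hcomp _ _).1 p.2.2.2⟩
        invFun q := ⟨(q.1.1, q.1.2), q.1.1.2, q.1.2.2, (hcomp _ _).2 q.2⟩
        left_inv _ := rfl
        right_inv _ := rfl }
  · exact
      { toFun r := ⟨(r.1.1, r.1.2),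
          mem_filter.2 ⟨mem_product.2 ⟨r.1.1.2, r.1.2.2⟩, r.2⟩⟩
        invFun x := ⟨(⟨_, (mem_product.1 (mem_filter.1 x.2).1).1⟩,
          ⟨_, (mem_product.1 (mem_filter.1 x.2).1).2⟩), (mem_filter.1 x.2).2⟩
        left_inv _ := rfl
        right_inv _ := rfl }

end Encoding

lemma prod_range_add_one_add_eq_factorial_mul_choose (s k : ℕ) :
    ∏ i ∈ range k, (s + 1 + i) = k.factorial * (s + k).choose s := by
  rw [← Nat.ascFactorial_eq_prod_range, Nat.ascFactorial_eq_factorial_mul_choose,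
    Nat.choose_symm_add]

/-- The proportion of ordered pairs `(α,β) ∈ C(s,n) × C(s,n)` for which the earth mover's
distance equals the absolute weighted difference `|T(α) − T(β)|` is
`2(s+n)/(n(s+1)) − (n-1)!/((s+1)(s+2)⋯(s+n-1))`. -/
theorem proportion_emd_eq_weighted_difference (s n : ℕ) (hn : 1 ≤ n) :
    (Nat.card {p : (ℕ → ℕ) × (ℕ → ℕ) //
        IsComp s n p.1 ∧ IsComp s n p.2 ∧
          emd s n p.1 p.2
            = ((weightedTotal n p.1 : ℤ) - (weightedTotal n p.2 : ℤ)).natAbs} : ℚ)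
      / ((Nat.card {α : ℕ → ℕ // IsComp s n α} : ℚ)) ^ 2
    = 2 * ((s : ℚ) + n) / ((n : ℚ) * ((s : ℚ) + 1))
        - ((n - 1).factorial : ℚ) / ∏ i ∈ Finset.range (n - 1), ((s : ℚ) + 1 + i) := by
  rw [card_emd_eq_natAbs, card_isComp]
  set m := s + n - 1
  have hcount : (#(comparablePairs m s) : ℚ) + m.choose s + 2 * #(crossingPairs m s)
      = 2 * m.choose s ^ 2 := by exact_mod_cast card_comparablePairs_add m s
  have hcross := card_crossingPairs_mul m s
  rw [show m + 1 - s = n by omega, show m - s = n - 1 by omega] at hcross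
  have hcross' : (#(crossingPairs m s) : ℚ) * ((s + 1) * n) = m.choose s ^ 2 * (s * (n - 1)) := by
    rw [← Nat.cast_pred hn]; exact_mod_cast hcross
  have hprod : ∏ i ∈ range (n - 1), ((s : ℚ) + 1 + i) = (n - 1).factorial * m.choose s := by
    rw [show m = s + (n - 1) by omega]
    exact_mod_cast prod_range_add_one_add_eq_factorial_mul_choose s (n - 1)
  have hC : (m.choose s : ℚ) ≠ 0 := Nat.cast_ne_zero.2 (Nat.choose_pos (by omega)).ne'
  rw [hprod]
  field_simp
  linear_combination (n * (s + 1) : ℚ) * hcount - 2 * hcross'
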